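/- Let K ⊇ R be a Hopf–Galois extension over a finite-dimensional Hopf algebra H', and W a left K-module. Then End_R(W) is a left H'-module algebra with action (h·T)(w) = h^{[1]} T(h^{[2]} w), and the invariants End_R(W)^{H'} coincide with End_K(W). -/

import Mathlib

/-!
Because `β` identifies `K ⊗_R K` with `H' ⊗ K`, every `R`-linear `T` yields a linear map
`A_T : H' ⊗ K → End_k W` with `A_T (β (x ⊗ y)) = x T y`, and `h · T = A_T (h ⊗ 1)`.
As `β (x ⊗ y z) = β (x ⊗ y) (1 ⊗ z)` and `β (x y ⊗ z) = λ(x) β (y ⊗ z)`, we get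
`A_T (v (1 ⊗ z)) = A_T(v) z` and `A_T (λ(x) v) = x A_T(v)`; since `h ⊗ 1` commutes with
`1 ⊗ K`, these rules give the `R`-linearity of `h · T` and the action law.
Coassociativity of `λ` identifies `A_{TU}` with `h ⊗ v ↦ A_T (h ⊗ 1) A_U(v)` after `Δ ⊗ id`,
which is the module-algebra property. Finally `A_T (h ⊗ 1) = ε(h) T` for all `h` means
`A_T = T ∘ (ε ⊗ id)`, and evaluating at `λ(a)` gives `a T = T a`; conversely a `K`-linear `T`
has `x T y = T (x y)` and `(ε ⊗ id) ∘ β` is the multiplication.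
-/

open TensorProduct

/-- Relations of `K ⊗_R K`, `R = K^{co H'}`. -/
noncomputable def galRel (k : Type*) {H' K : Type*} [CommSemiring k] [Semiring H']
    [Algebra k H'] [Ring K] [Algebra k K] (lam : K →ₐ[k] H' ⊗[k] K) :
    Submodule k (K ⊗[k] K) :=
  Submodule.span k {z | ∃ x y r : K,
    lam r = (1 : H') ⊗ₜ[k] r ∧ z = (x * r) ⊗ₜ[k] y - x ⊗ₜ[k] (r * y)}

/-- The canonical Galois map on `K ⊗ K`: `x ⊗ y ↦ x₍₋₁₎ ⊗ x₍₀₎ y`. -/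
noncomputable def galBeta (k : Type*) {H' K : Type*} [CommSemiring k] [Semiring H']
    [Algebra k H'] [Ring K] [Algebra k K] (lam : K →ₐ[k] H' ⊗[k] K) :
    K ⊗[k] K →ₗ[k] H' ⊗[k] K :=
  LinearMap.lTensor H' (LinearMap.mul' k K) ∘ₗ
    (TensorProduct.assoc k H' K K).toLinearMap ∘ₗ
      LinearMap.rTensor K lam.toLinearMap

/-- Scalar action of `a : K` on a `K`-module `W` as a `k`-linear endomorphism. -/
noncomputable def sm (k : Type*) {K W : Type*} [CommSemiring k] [Semiring K]
    [AddCommMonoid W] [Module k W] [Module K W] [SMulCommClass K k W] (a : K) :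
    W →ₗ[k] W where
  toFun w := a • w
  map_add' w w' := smul_add a w w'
  map_smul' c w := smul_comm a c w

theorem TensorProduct.exists_fin_sum_tmul {R M N : Type*} [CommSemiring R] [AddCommMonoid M]
    [AddCommMonoid N] [Module R M] [Module R N] (x : M ⊗[R] N) :
    ∃ (n : ℕ) (a : Fin n → M) (b : Fin n → N), x = ∑ i, a i ⊗ₜ[R] b i := by
  obtain ⟨S, rfl⟩ := exists_finset x
  exact ⟨S.card, fun i => (S.equivFin.symm i).1.1, fun i => (S.equivFin.symm i).1.2,
    by rw [← Finset.sum_coe_sort, ← Equiv.sum_comp S.equivFin.symm]⟩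

@[simp] lemma sm_apply {k K W : Type*} [CommSemiring k] [Semiring K] [AddCommMonoid W]
    [Module k W] [Module K W] [SMulCommClass K k W] (a : K) (w : W) : sm k a w = a • w := rfl

lemma sm_mul {k K W : Type*} [CommSemiring k] [Semiring K] [AddCommMonoid W]
    [Module k W] [Module K W] [SMulCommClass K k W] (a b : K) :
    sm k (a * b) = (sm k a ∘ₗ sm k b : W →ₗ[k] W) := by
  ext w; simp [mul_smul]

def CommutesWithCoinvariants {k H' K W : Type*} [CommSemiring k] [Semiring H'] [Algebra k H']
    [Semiring K] [Algebra k K] [AddCommMonoid W] [Module k W] [Module K W]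
    (lam : K →ₐ[k] H' ⊗[k] K) (T : W →ₗ[k] W) : Prop :=
  ∀ r : K, lam r = (1 : H') ⊗ₜ[k] r → ∀ w : W, T (r • w) = r • T w

lemma CommutesWithCoinvariants.comp {k H' K W : Type*} [CommSemiring k] [Semiring H']
    [Algebra k H'] [Semiring K] [Algebra k K] [AddCommMonoid W] [Module k W] [Module K W]
    {lam : K →ₐ[k] H' ⊗[k] K} {T U : W →ₗ[k] W}
    (hT : CommutesWithCoinvariants lam T) (hU : CommutesWithCoinvariants lam U) :
    CommutesWithCoinvariants lam (T ∘ₗ U) := fun r hr w => by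
  rw [LinearMap.comp_apply, LinearMap.comp_apply, hU r hr, hT r hr]

section Sandwich

variable {k H' K W : Type*} [CommSemiring k] [Semiring H'] [Algebra k H'] [Ring K] [Algebra k K]
  [AddCommGroup W] [Module k W] [Module K W] [IsScalarTower k K W] [SMulCommClass K k W]

noncomputable def sandwich (T : W →ₗ[k] W) : K ⊗[k] K →ₗ[k] W →ₗ[k] W :=
  TensorProduct.lift (LinearMap.mk₂ k (fun x y => sm k x ∘ₗ T ∘ₗ sm k y)
    (fun a b y => by ext w; simp [add_smul])
    (fun c a y => by ext w; simp [smul_assoc])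
    (fun a b y => by ext w; simp [add_smul])
    (fun c a y => by ext w; simp [smul_assoc]))

@[simp] lemma sandwich_tmul (T : W →ₗ[k] W) (x y : K) :
    sandwich T (x ⊗ₜ[k] y) = sm k x ∘ₗ T ∘ₗ sm k y := rfl

lemma sandwich_sum {n : ℕ} (T : W →ₗ[k] W) (a b : Fin n → K) :
    sandwich T (∑ i, a i ⊗ₜ[k] b i) = ∑ i, sm k (a i) ∘ₗ T ∘ₗ sm k (b i) := by
  simp only [map_sum, sandwich_tmul]

lemma sandwich_lTensor_mulRight (T : W →ₗ[k] W) (x : K) (z : K ⊗[k] K) :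
    sandwich T (LinearMap.lTensor K (LinearMap.mulRight k x) z) = sandwich T z ∘ₗ sm k x := by
  induction z using TensorProduct.induction_on with
  | zero => simp
  | tmul a b => simp [sm_mul, LinearMap.comp_assoc]
  | add u v hu hv => simp [hu, hv, LinearMap.add_comp]

lemma sandwich_rTensor_mulLeft (T : W →ₗ[k] W) (x : K) (z : K ⊗[k] K) :
    sandwich T (LinearMap.rTensor K (LinearMap.mulLeft k x) z) = sm k x ∘ₗ sandwich T z := by
  induction z using TensorProduct.induction_on with
  | zero => simp
  | tmul a b => simp [sm_mul, LinearMap.comp_assoc]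
  | add u v hu hv => simp [hu, hv, LinearMap.comp_add]

lemma galRel_le_ker_sandwich {lam : K →ₐ[k] H' ⊗[k] K} {T : W →ₗ[k] W}
    (hT : CommutesWithCoinvariants lam T) : galRel k lam ≤ LinearMap.ker (sandwich T) := by
  refine Submodule.span_le.2 ?_
  rintro _ ⟨x, y, r, hr, rfl⟩
  ext w
  simp [mul_smul, hT r hr]

variable (lam : K →ₐ[k] H' ⊗[k] K)

lemma galBeta_tmul (x y : K) : galBeta k lam (x ⊗ₜ[k] y) = lam x * ((1 : H') ⊗ₜ[k] y) := by
  suffices ∀ u : H' ⊗[k] K, LinearMap.lTensor H' (LinearMap.mul' k K)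
      (TensorProduct.assoc k H' K K (u ⊗ₜ[k] y)) = u * ((1 : H') ⊗ₜ[k] y) from this (lam x)
  intro u
  induction u using TensorProduct.induction_on with
  | zero => simp
  | tmul a b => simp
  | add u v hu hv => simp only [add_tmul, map_add, hu, hv, add_mul]

lemma galBeta_lTensor_mulRight (x : K) (z : K ⊗[k] K) :
    galBeta k lam (LinearMap.lTensor K (LinearMap.mulRight k x) z)
      = galBeta k lam z * ((1 : H') ⊗ₜ[k] x) := by
  induction z using TensorProduct.induction_on with
  | zero => simp
  | tmul a b => simp [galBeta_tmul, mul_assoc]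
  | add u v hu hv => simp only [map_add, hu, hv, add_mul]

lemma galBeta_rTensor_mulLeft (x : K) (z : K ⊗[k] K) :
    galBeta k lam (LinearMap.rTensor K (LinearMap.mulLeft k x) z) = lam x * galBeta k lam z := by
  induction z using TensorProduct.induction_on with
  | zero => simp
  | tmul a b => simp [galBeta_tmul, mul_assoc]
  | add u v hu hv => simp only [map_add, hu, hv, mul_add]

end Sandwich

section Action

variable {k H' K W : Type*} [CommRing k] [Semiring H'] [Algebra k H'] [Ring K] [Algebra k K]
  [AddCommGroup W] [Module k W] [Module K W] [IsScalarTower k K W] [SMulCommClass K k W]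
  {lam : K →ₐ[k] H' ⊗[k] K}

lemma galBeta_surjective {βbar : (K ⊗[k] K ⧸ galRel k lam) →ₗ[k] H' ⊗[k] K}
    (hfac : βbar ∘ₗ (galRel k lam).mkQ = galBeta k lam) (hbij : Function.Bijective βbar) :
    Function.Surjective (galBeta k lam) := by
  rw [← hfac, LinearMap.coe_comp]
  exact hbij.2.comp (galRel k lam).mkQ_surjective

lemma mkQ_eq_invFun_iff {βbar : (K ⊗[k] K ⧸ galRel k lam) →ₗ[k] H' ⊗[k] K}
    (hfac : βbar ∘ₗ (galRel k lam).mkQ = galBeta k lam) (hbij : Function.Bijective βbar)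
    (z : K ⊗[k] K) (u : H' ⊗[k] K) :
    (galRel k lam).mkQ z = Function.invFun βbar u ↔ galBeta k lam z = u := by
  rw [← hfac, LinearMap.comp_apply, ← hbij.1.eq_iff, Function.invFun_eq (hbij.2 u)]

lemma exists_comp_galBeta_eq_sandwich {βbar : (K ⊗[k] K ⧸ galRel k lam) →ₗ[k] H' ⊗[k] K}
    (hfac : βbar ∘ₗ (galRel k lam).mkQ = galBeta k lam) (hbij : Function.Bijective βbar)
    {T : W →ₗ[k] W} (hT : CommutesWithCoinvariants lam T) :
    ∃ A : H' ⊗[k] K →ₗ[k] W →ₗ[k] W, A ∘ₗ galBeta k lam = sandwich T := by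
  refine ⟨(galRel k lam).liftQ (sandwich T) (galRel_le_ker_sandwich hT) ∘ₗ
    (LinearEquiv.ofBijective βbar hbij).symm.toLinearMap, ?_⟩
  refine LinearMap.ext fun z => ?_
  rw [← hfac, LinearMap.comp_apply, LinearMap.comp_apply, LinearMap.comp_apply,
    LinearEquiv.coe_coe, ← LinearEquiv.ofBijective_apply (hf := hbij),
    LinearEquiv.symm_apply_apply, Submodule.mkQ_apply, Submodule.liftQ_apply]

variable {T : W →ₗ[k] W} {A : H' ⊗[k] K →ₗ[k] W →ₗ[k] W}

lemma act_lam (hA : A ∘ₗ galBeta k lam = sandwich T) (x : K) : A (lam x) = sm k x ∘ₗ T := by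
  have := LinearMap.congr_fun hA (x ⊗ₜ 1)
  rwa [LinearMap.comp_apply, galBeta_tmul, ← Algebra.TensorProduct.one_def, mul_one,
    sandwich_tmul, show sm k (1 : K) = LinearMap.id by ext; simp, LinearMap.comp_id] at this

lemma act_mul_one_tmul (hA : A ∘ₗ galBeta k lam = sandwich T)
    (hsurj : Function.Surjective (galBeta k lam)) (v : H' ⊗[k] K) (x : K) :
    A (v * ((1 : H') ⊗ₜ x)) = A v ∘ₗ sm k x := by
  obtain ⟨z, rfl⟩ := hsurj v
  rw [← galBeta_lTensor_mulRight, ← LinearMap.comp_apply A, hA, ← LinearMap.comp_apply A, hA,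
    sandwich_lTensor_mulRight]

lemma act_lam_mul (hA : A ∘ₗ galBeta k lam = sandwich T)
    (hsurj : Function.Surjective (galBeta k lam)) (x : K) (v : H' ⊗[k] K) :
    A (lam x * v) = sm k x ∘ₗ A v := by
  obtain ⟨z, rfl⟩ := hsurj v
  rw [← galBeta_rTensor_mulLeft, ← LinearMap.comp_apply A, hA, ← LinearMap.comp_apply A, hA,
    sandwich_rTensor_mulLeft]

lemma act_tmul_mul (hA : A ∘ₗ galBeta k lam = sandwich T)
    (hsurj : Function.Surjective (galBeta k lam)) (h : H') (x y : K) :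
    A (h ⊗ₜ (x * y)) = A (h ⊗ₜ x) ∘ₗ sm k y := by
  rw [← act_mul_one_tmul hA hsurj, Algebra.TensorProduct.tmul_mul_tmul, mul_one]

lemma act_tmul (hA : A ∘ₗ galBeta k lam = sandwich T)
    (hsurj : Function.Surjective (galBeta k lam)) (h : H') (x : K) :
    A (h ⊗ₜ x) = A (h ⊗ₜ 1) ∘ₗ sm k x := by
  rw [← act_tmul_mul hA hsurj, one_mul]

lemma sandwich_act_tmul_one (hA : A ∘ₗ galBeta k lam = sandwich T)
    (hsurj : Function.Surjective (galBeta k lam)) (h : H') (z : K ⊗[k] K) :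
    sandwich (A (h ⊗ₜ 1)) z = A (galBeta k lam z * (h ⊗ₜ 1)) := by
  induction z using TensorProduct.induction_on with
  | zero => simp
  | tmul a b =>
    rw [sandwich_tmul, ← act_tmul hA hsurj, ← act_lam_mul hA hsurj, galBeta_tmul, mul_assoc,
      Algebra.TensorProduct.tmul_mul_tmul, one_mul, mul_one]
  | add u v hu hv => rw [map_add, hu, hv, map_add, add_mul, map_add]

lemma commutesWithCoinvariants_act (hA : A ∘ₗ galBeta k lam = sandwich T)
    (hsurj : Function.Surjective (galBeta k lam)) (h : H') :
    CommutesWithCoinvariants lam (A (h ⊗ₜ 1)) := by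
  intro r hr w
  have hcomm : A (h ⊗ₜ 1) ∘ₗ sm k r = sm k r ∘ₗ A (h ⊗ₜ 1) := by
    rw [← act_tmul hA hsurj, ← act_lam_mul hA hsurj, hr, Algebra.TensorProduct.tmul_mul_tmul,
      one_mul, mul_one]
  exact LinearMap.congr_fun hcomm w

end Action

lemma sandwich_eq_comp_sm_mul' {k K W : Type*} [CommSemiring k] [Ring K] [Algebra k K]
    [AddCommGroup W] [Module k W] [Module K W] [IsScalarTower k K W] [SMulCommClass K k W]
    {T : W →ₗ[k] W} (hT : ∀ (a : K) (w : W), T (a • w) = a • T w) (z : K ⊗[k] K) :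
    sandwich T z = T ∘ₗ sm k (LinearMap.mul' k K z) := by
  induction z using TensorProduct.induction_on with
  | zero => ext; simp
  | tmul a b => ext w; simp [mul_smul, hT]
  | add u v hu hv => ext w; simp [hu, hv, add_smul]

noncomputable def actComp {k H' K W : Type*} [CommSemiring k] [AddCommMonoid H'] [Module k H']
    [Semiring K] [Algebra k K] [AddCommMonoid W] [Module k W]
    (B C : H' ⊗[k] K →ₗ[k] W →ₗ[k] W) : H' ⊗[k] (H' ⊗[k] K) →ₗ[k] W →ₗ[k] W :=
  TensorProduct.lift
    ((LinearMap.llcomp k W W W).compl₁₂ (B ∘ₗ (TensorProduct.mk k H' K).flip 1) C)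

@[simp] lemma actComp_tmul {k H' K W : Type*} [CommSemiring k] [AddCommMonoid H'] [Module k H']
    [Semiring K] [Algebra k K] [AddCommMonoid W] [Module k W]
    (B C : H' ⊗[k] K →ₗ[k] W →ₗ[k] W) (h : H') (v : H' ⊗[k] K) :
    actComp B C (h ⊗ₜ v) = B (h ⊗ₜ 1) ∘ₗ C v := rfl

section Bialgebra

variable {k H' K W : Type*} [CommRing k] [Semiring H'] [Bialgebra k H'] [Ring K] [Algebra k K]
  [AddCommGroup W] [Module k W] [Module K W] [IsScalarTower k K W] [SMulCommClass K k W]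
  {lam : K →ₐ[k] H' ⊗[k] K}

lemma lid_rTensor_counit_mul_one_tmul (v : H' ⊗[k] K) (x : K) :
    TensorProduct.lid k K (LinearMap.rTensor K Coalgebra.counit (v * ((1 : H') ⊗ₜ x)))
      = TensorProduct.lid k K (LinearMap.rTensor K Coalgebra.counit v) * x := by
  induction v using TensorProduct.induction_on with
  | zero => simp
  | tmul h y => simp
  | add u v hu hv => simp only [add_mul, map_add, hu, hv]

lemma lid_rTensor_counit_galBeta
    (hcounit : ∀ x : K,
      TensorProduct.lid k K (LinearMap.rTensor K Coalgebra.counit (lam x)) = x)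
    (z : K ⊗[k] K) :
    TensorProduct.lid k K (LinearMap.rTensor K Coalgebra.counit (galBeta k lam z))
      = LinearMap.mul' k K z := by
  induction z using TensorProduct.induction_on with
  | zero => simp
  | tmul a b => rw [galBeta_tmul, lid_rTensor_counit_mul_one_tmul, hcounit, LinearMap.mul'_apply]
  | add u v hu hv => simp only [map_add, hu, hv]

variable {T U : W →ₗ[k] W} {A B C : H' ⊗[k] K →ₗ[k] W →ₗ[k] W}

lemma act_tmul_one_eq_counit_smul_iff
    (hcounit : ∀ x : K,
      TensorProduct.lid k K (LinearMap.rTensor K Coalgebra.counit (lam x)) = x)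
    (hA : A ∘ₗ galBeta k lam = sandwich T) (hsurj : Function.Surjective (galBeta k lam)) :
    (∀ h : H', A (h ⊗ₜ 1) = Coalgebra.counit (R := k) h • T) ↔
      ∀ (a : K) (w : W), T (a • w) = a • T w := by
  constructor
  · intro hinv a w
    have hA_eq : ∀ v, A v
        = T ∘ₗ sm k (TensorProduct.lid k K (LinearMap.rTensor K Coalgebra.counit v)) := by
      intro v
      induction v using TensorProduct.induction_on with
      | zero => ext; simp
      | tmul h x => rw [act_tmul hA hsurj, hinv]; ext w; simp [smul_assoc]
      | add u v hu hv => rw [map_add, hu, hv]; ext w; simp [add_smul]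
    have := hA_eq (lam a)
    rw [act_lam hA, hcounit] at this
    exact (LinearMap.congr_fun this w).symm
  · intro hK h
    obtain ⟨z, hz⟩ := hsurj (h ⊗ₜ 1)
    have hmul : LinearMap.mul' k K z = Coalgebra.counit (R := k) h • (1 : K) := by
      rw [← lid_rTensor_counit_galBeta hcounit, hz, LinearMap.rTensor_tmul, lid_tmul]
    rw [← hz, ← LinearMap.comp_apply A, hA, sandwich_eq_comp_sm_mul' hK, hmul]
    ext w
    simp [smul_assoc]

lemma act_comp_eq_actComp_comul
    (hcoassoc : ∀ x : K,
      LinearMap.rTensor K Coalgebra.comul (lam x)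
        = (TensorProduct.assoc k H' H' K).symm (LinearMap.lTensor H' lam.toLinearMap (lam x)))
    (hsurj : Function.Surjective (galBeta k lam))
    (hB : B ∘ₗ galBeta k lam = sandwich T) (hC : C ∘ₗ galBeta k lam = sandwich U)
    (hA : A ∘ₗ galBeta k lam = sandwich (T ∘ₗ U)) :
    A = actComp B C ∘ₗ (TensorProduct.assoc k H' H' K).toLinearMap ∘ₗ
      LinearMap.rTensor K Coalgebra.comul := by
  set N := actComp B C ∘ₗ (TensorProduct.assoc k H' H' K).toLinearMap ∘ₗ
    LinearMap.rTensor K Coalgebra.comul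
  have hN_mul : ∀ v x, N (v * ((1 : H') ⊗ₜ x)) = N v ∘ₗ sm k x := by
    intro v x
    induction v using TensorProduct.induction_on with
    | zero => simp
    | tmul h y =>
      rw [Algebra.TensorProduct.tmul_mul_tmul, mul_one]
      simp only [N, LinearMap.comp_apply, LinearMap.rTensor_tmul, LinearEquiv.coe_coe]
      induction (Coalgebra.comul h : H' ⊗[k] H') using TensorProduct.induction_on with
      | zero => simp
      | tmul h₁ h₂ =>
        rw [assoc_tmul, assoc_tmul, actComp_tmul, actComp_tmul, act_tmul_mul hC hsurj,
          LinearMap.comp_assoc]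
      | add u v hu hv => rw [add_tmul, map_add, map_add, hu, hv, add_tmul, map_add, map_add,
          LinearMap.add_comp]
    | add u v hu hv => rw [add_mul, map_add, hu, hv, map_add, LinearMap.add_comp]
  have hactComp_lTensor : ∀ v, actComp B C (LinearMap.lTensor H' lam.toLinearMap v) = B v ∘ₗ U := by
    intro v
    induction v using TensorProduct.induction_on with
    | zero => simp
    | tmul h y =>
      rw [LinearMap.lTensor_tmul, actComp_tmul, AlgHom.toLinearMap_apply, act_lam hC,
        act_tmul hB hsurj h y, LinearMap.comp_assoc]
    | add u v hu hv => rw [map_add, map_add, hu, hv, map_add, LinearMap.add_comp]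
  have hN_lam : ∀ x, N (lam x) = sm k x ∘ₗ T ∘ₗ U := by
    intro x
    simp only [N, LinearMap.comp_apply, LinearEquiv.coe_coe, hcoassoc,
      LinearEquiv.apply_symm_apply, hactComp_lTensor, act_lam hB, LinearMap.comp_assoc]
  rw [← LinearMap.cancel_right hsurj, hA]
  refine (TensorProduct.ext' fun a b => ?_).symm
  rw [LinearMap.comp_apply, galBeta_tmul, hN_mul, hN_lam, sandwich_tmul, LinearMap.comp_assoc,
    LinearMap.comp_assoc]

end Bialgebra

theorem stmt16_general {k H' K : Type*} [Field k] [Ring H'] [HopfAlgebra k H']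
    [Ring K] [Algebra k K]
    (lam : K →ₐ[k] H' ⊗[k] K)
    (hcounit : ∀ x : K,
      (TensorProduct.lid k K) ((LinearMap.rTensor K (Coalgebra.counit (R := k))) (lam x)) = x)
    (hcoassoc : ∀ x : K,
      (LinearMap.rTensor K (Coalgebra.comul (R := k))) (lam x)
        = (TensorProduct.assoc k H' H' K).symm
            ((LinearMap.lTensor H' lam.toLinearMap) (lam x)))
    (βbar : ((K ⊗[k] K) ⧸ galRel k lam) →ₗ[k] H' ⊗[k] K)
    (hfac : βbar ∘ₗ (galRel k lam).mkQ = galBeta k lam)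
    (hbij : Function.Bijective βbar)
    -- a left `K`-module `W`
    (W : Type*) [AddCommGroup W] [Module k W] [Module K W]
    [IsScalarTower k K W] [SMulCommClass K k W] :
    let π : K ⊗[k] K →ₗ[k] (K ⊗[k] K) ⧸ galRel k lam := (galRel k lam).mkQ
    let γ : H' → (K ⊗[k] K) ⧸ galRel k lam :=
      fun h => Function.invFun βbar (h ⊗ₜ[k] (1 : K))
    -- `T ∈ End_R(W)` iff it commutes with the action of coinvariants
    let EndR : (W →ₗ[k] W) → Prop :=
      fun T => ∀ r : K, lam r = (1 : H') ⊗ₜ[k] r → ∀ w : W, T (r • w) = r • T w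
    -- `(h · T)` computed from a representative of `h^{[1]} ⊗ h^{[2]}`
    let actOf : ∀ n : ℕ, (Fin n → K) → (Fin n → K) → (W →ₗ[k] W) → (W →ₗ[k] W) :=
      fun n ha hb T => ∑ i, sm k (ha i) ∘ₗ T ∘ₗ sm k (hb i)
    -- well-definedness and `R`-linearity of the action
    (∀ (h : H') (n : ℕ) (ha hb : Fin n → K), π (∑ i, ha i ⊗ₜ[k] hb i) = γ h →
      ∀ T : W →ₗ[k] W, EndR T → EndR (actOf n ha hb T)) ∧
    (∀ (h : H') (n m : ℕ) (ha hb : Fin n → K) (ha' hb' : Fin m → K),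
      π (∑ i, ha i ⊗ₜ[k] hb i) = γ h → π (∑ j, ha' j ⊗ₜ[k] hb' j) = γ h →
      ∀ T : W →ₗ[k] W, EndR T → actOf n ha hb T = actOf m ha' hb' T) ∧
    -- it is an action: `(th) · T = t · (h · T)`
    (∀ (t h : H') (n m l : ℕ) (ta tb : Fin n → K) (ha hb : Fin m → K)
        (pa pb : Fin l → K),
      π (∑ i, ta i ⊗ₜ[k] tb i) = γ t → π (∑ j, ha j ⊗ₜ[k] hb j) = γ h →
      π (∑ j, pa j ⊗ₜ[k] pb j) = γ (t * h) →
      ∀ T : W →ₗ[k] W, EndR T →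
        actOf l pa pb T = actOf n ta tb (actOf m ha hb T)) ∧
    -- module-algebra property: `h · (T U) = (h₁ · T)(h₂ · U)`
    (∀ (h : H') (n : ℕ) (ha hb : Fin n → K), π (∑ i, ha i ⊗ₜ[k] hb i) = γ h →
      ∀ (m : ℕ) (c1 c2 : Fin m → H'),
        Coalgebra.comul (R := k) h = ∑ j, c1 j ⊗ₜ[k] c2 j →
      ∀ (l : ℕ) (pa pb qa qb : Fin m → Fin l → K),
        (∀ j, π (∑ s, pa j s ⊗ₜ[k] pb j s) = γ (c1 j)) →
        (∀ j, π (∑ s, qa j s ⊗ₜ[k] qb j s) = γ (c2 j)) →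
      ∀ T U : W →ₗ[k] W, EndR T → EndR U →
        actOf n ha hb (T ∘ₗ U)
          = ∑ j, (actOf l (pa j) (pb j) T) ∘ₗ (actOf l (qa j) (qb j) U)) ∧
    -- the invariants of `End_R(W)` are exactly `End_K(W)`
    (∀ T : W →ₗ[k] W, EndR T →
      ((∀ (h : H') (n : ℕ) (ha hb : Fin n → K), π (∑ i, ha i ⊗ₜ[k] hb i) = γ h →
          actOf n ha hb T = Coalgebra.counit (R := k) h • T)
        ↔ (∀ (a : K) (w : W), T (a • w) = a • T w))) := by
  intro π γ EndR actOf
  have hsurj := galBeta_surjective hfac hbij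
  choose A hA using fun T (hT : CommutesWithCoinvariants lam T) =>
    exists_comp_galBeta_eq_sandwich (W := W) hfac hbij hT
  have hrep : ∀ {T : W →ₗ[k] W} (hT : EndR T) {h : H'} {n : ℕ} {a b : Fin n → K},
      π (∑ i, a i ⊗ₜ[k] b i) = γ h → actOf n a b T = A T hT (h ⊗ₜ 1) := fun hT _ _ _ _ hπ =>
    (sandwich_sum _ _ _).symm.trans (by
      rw [← hA _ hT, LinearMap.comp_apply, (mkQ_eq_invFun_iff hfac hbij _ _).1 hπ])
  refine ⟨?_, ?_, ?_, ?_, ?_⟩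
  · intro h n a b hπ T hT
    rw [hrep hT hπ]
    exact commutesWithCoinvariants_act (hA T hT) hsurj h
  · intro h n m a b a' b' hπ hπ' T hT
    rw [hrep hT hπ, hrep hT hπ']
  · intro t h n m l ta tb ha hb pa pb hπt hπh hπth T hT
    rw [hrep hT hπth, hrep hT hπh]
    refine .symm ((sandwich_sum _ _ _).symm.trans ?_)
    rw [sandwich_act_tmul_one (hA T hT) hsurj, (mkQ_eq_invFun_iff hfac hbij _ _).1 hπt,
      Algebra.TensorProduct.tmul_mul_tmul, mul_one]
  · intro h n a b hπ m c₁ c₂ hΔ l pa pb qa qb hπ₁ hπ₂ T U hT hU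
    have hTU := CommutesWithCoinvariants.comp hT hU
    rw [hrep hTU hπ, act_comp_eq_actComp_comul hcoassoc hsurj (hA T hT) (hA U hU) (hA _ hTU)]
    simp only [LinearMap.comp_apply, LinearMap.rTensor_tmul, hΔ, sum_tmul, map_sum,
      LinearEquiv.coe_coe, assoc_tmul, actComp_tmul, hrep hT (hπ₁ _), hrep hU (hπ₂ _)]
  · intro T hT
    rw [← act_tmul_one_eq_counit_smul_iff hcounit (hA T hT) hsurj]
    refine ⟨fun hinv h => ?_, fun hinv h n a b hπ => (hrep hT hπ).trans (hinv h)⟩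
    obtain ⟨z, hz⟩ := hsurj (h ⊗ₜ 1)
    obtain ⟨n, a, b, rfl⟩ := TensorProduct.exists_fin_sum_tmul z
    have hπ := (mkQ_eq_invFun_iff hfac hbij _ _).2 hz
    exact (hrep hT hπ).symm.trans (hinv h n a b hπ)

/-- `End_R(W)` is a left `H'`-module algebra via `(h·T)(w) = h^{[1]} T(h^{[2]} w)`, and
its invariants are `End_K(W)`. -/
theorem stmt16 {k H' K : Type*} [Field k] [Ring H'] [HopfAlgebra k H']
    [FiniteDimensional k H'] [Ring K] [Algebra k K] [FiniteDimensional k K]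
    (lam : K →ₐ[k] H' ⊗[k] K)
    (hcounit : ∀ x : K,
      (TensorProduct.lid k K) ((LinearMap.rTensor K (Coalgebra.counit (R := k))) (lam x)) = x)
    (hcoassoc : ∀ x : K,
      (LinearMap.rTensor K (Coalgebra.comul (R := k))) (lam x)
        = (TensorProduct.assoc k H' H' K).symm
            ((LinearMap.lTensor H' lam.toLinearMap) (lam x)))
    (βbar : ((K ⊗[k] K) ⧸ galRel k lam) →ₗ[k] H' ⊗[k] K)
    (hfac : βbar ∘ₗ (galRel k lam).mkQ = galBeta k lam)
    (hbij : Function.Bijective βbar)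
    -- a left `K`-module `W`
    (W : Type*) [AddCommGroup W] [Module k W] [Module K W]
    [IsScalarTower k K W] [SMulCommClass K k W] [FiniteDimensional k W] :
    let π : K ⊗[k] K →ₗ[k] (K ⊗[k] K) ⧸ galRel k lam := (galRel k lam).mkQ
    let γ : H' → (K ⊗[k] K) ⧸ galRel k lam :=
      fun h => Function.invFun βbar (h ⊗ₜ[k] (1 : K))
    -- `T ∈ End_R(W)` iff it commutes with the action of coinvariants
    let EndR : (W →ₗ[k] W) → Prop :=
      fun T => ∀ r : K, lam r = (1 : H') ⊗ₜ[k] r → ∀ w : W, T (r • w) = r • T w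
    -- `(h · T)` computed from a representative of `h^{[1]} ⊗ h^{[2]}`
    let actOf : ∀ n : ℕ, (Fin n → K) → (Fin n → K) → (W →ₗ[k] W) → (W →ₗ[k] W) :=
      fun n ha hb T => ∑ i, sm k (ha i) ∘ₗ T ∘ₗ sm k (hb i)
    -- well-definedness and `R`-linearity of the action
    (∀ (h : H') (n : ℕ) (ha hb : Fin n → K), π (∑ i, ha i ⊗ₜ[k] hb i) = γ h →
      ∀ T : W →ₗ[k] W, EndR T → EndR (actOf n ha hb T)) ∧
    (∀ (h : H') (n m : ℕ) (ha hb : Fin n → K) (ha' hb' : Fin m → K),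
      π (∑ i, ha i ⊗ₜ[k] hb i) = γ h → π (∑ j, ha' j ⊗ₜ[k] hb' j) = γ h →
      ∀ T : W →ₗ[k] W, EndR T → actOf n ha hb T = actOf m ha' hb' T) ∧
    -- it is an action: `(th) · T = t · (h · T)`
    (∀ (t h : H') (n m l : ℕ) (ta tb : Fin n → K) (ha hb : Fin m → K)
        (pa pb : Fin l → K),
      π (∑ i, ta i ⊗ₜ[k] tb i) = γ t → π (∑ j, ha j ⊗ₜ[k] hb j) = γ h →
      π (∑ j, pa j ⊗ₜ[k] pb j) = γ (t * h) →
      ∀ T : W →ₗ[k] W, EndR T →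
        actOf l pa pb T = actOf n ta tb (actOf m ha hb T)) ∧
    -- module-algebra property: `h · (T U) = (h₁ · T)(h₂ · U)`
    (∀ (h : H') (n : ℕ) (ha hb : Fin n → K), π (∑ i, ha i ⊗ₜ[k] hb i) = γ h →
      ∀ (m : ℕ) (c1 c2 : Fin m → H'),
        Coalgebra.comul (R := k) h = ∑ j, c1 j ⊗ₜ[k] c2 j →
      ∀ (l : ℕ) (pa pb qa qb : Fin m → Fin l → K),
        (∀ j, π (∑ s, pa j s ⊗ₜ[k] pb j s) = γ (c1 j)) →
        (∀ j, π (∑ s, qa j s ⊗ₜ[k] qb j s) = γ (c2 j)) →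
      ∀ T U : W →ₗ[k] W, EndR T → EndR U →
        actOf n ha hb (T ∘ₗ U)
          = ∑ j, (actOf l (pa j) (pb j) T) ∘ₗ (actOf l (qa j) (qb j) U)) ∧
    -- the invariants of `End_R(W)` are exactly `End_K(W)`
    (∀ T : W →ₗ[k] W, EndR T →
      ((∀ (h : H') (n : ℕ) (ha hb : Fin n → K), π (∑ i, ha i ⊗ₜ[k] hb i) = γ h →
          actOf n ha hb T = Coalgebra.counit (R := k) h • T)
        ↔ (∀ (a : K) (w : W), T (a • w) = a • T w))) :=
  stmt16_general lam hcounit hcoassoc βbar hfac hbij W
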